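/- arXiv:1808.02172 — 2 statements merged into one kernel-verified Lean document; each statement's English description precedes it below -/
import Mathlib

section
/- Let 𝓔 be an extension (i.e., a reflexive sheaf on the blow-up B̂ of the unit ball at 0 restricting to p*𝓔₀ off the exceptional divisor D ≅ ℂℙ^{n-1}), with Harder–Narasimhan slopes μ₁ > ⋯ > μ_m of ι*𝓔. Let 𝓔^k be the Hecke transform of 𝓔 along the k-th step E_k of the Harder–Narasimhan filtration. Then Φ(𝓔^k) ≤ max{μ_{k+1} − μ_m, Φ(𝓔) − 1, μ_{k+1} − μ_k + 1, μ₁ − μ_k}, where Φ(𝓕) := μ_max(ι*𝓕) − μ_min(ι*𝓕). -/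
/-! The slope spread `μmax - μmin` of the middle term of `0 → A → E → B → 0` is at most the
largest of the four differences `μmax X - μmin Y` with `X, Y ∈ {A, B}`; for the Hecke transform
`A = Q(1)`, `B = E_k`, and the twist by `O(1)` shifts both slopes of `Q` by one, which produces
the four terms of the bound. -/

universe u

/-- An abstract Harder–Narasimhan slope theory for torsion-free sheaves on `ℂℙ^{n-1}`
(with respect to the polarization `O(1)`): `μmax`/`μmin` are the maximal/minimal
Harder–Narasimhan slopes, `twist E k = E ⊗ O(k)` shifts all slopes by `k`, and
`SES A E B` records a short exact sequence `0 → A → E → B → 0`; any subsheaf bound gives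
`μmax E ≤ max (μmax A) (μmax B)`, and dually for `μmin`. -/
structure SlopeTheory where
  Obj : Type u
  μmax : Obj → ℚ
  μmin : Obj → ℚ
  twist : Obj → ℤ → Obj
  SES : Obj → Obj → Obj → Prop
  μmin_le_μmax : ∀ E, μmin E ≤ μmax E
  μmax_twist : ∀ E k, μmax (twist E k) = μmax E + k
  μmin_twist : ∀ E k, μmin (twist E k) = μmin E + k
  μmax_le : ∀ {A E B}, SES A E B → μmax E ≤ max (μmax A) (μmax B)
  μmin_ge : ∀ {A E B}, SES A E B → min (μmin A) (μmin B) ≤ μmin E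

theorem max_sub_min_eq_max_max {α : Type*} [AddCommGroup α] [LinearOrder α]
    [IsOrderedAddMonoid α] (a b c d : α) :
    max a b - min c d = max (max (a - c) (b - c)) (max (a - d) (b - d)) := by
  rw [max_sub_sub_right, max_sub_sub_right, max_sub_sub_left]

namespace SlopeTheory

theorem μmax_sub_μmin_le_of_SES (T : SlopeTheory.{u}) {A E B : T.Obj} (h : T.SES A E B) :
    T.μmax E - T.μmin E ≤ max (T.μmax A) (T.μmax B) - min (T.μmin A) (T.μmin B) :=
  sub_le_sub (T.μmax_le h) (T.μmin_ge h)

end SlopeTheory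

/-- `Ek` is the filtration step `E_k` (with `μmax Ek = μ₁`, `μmin Ek = μ_k`), `Q = (ι^*𝓔)/E_k`
(with `μmax Q = μ_{k+1}`, `μmin Q = μ_m`), and `Ek' = ι^*𝓔^k`. -/
theorem hecke_transform_slope_bound (T : SlopeTheory.{u})
    (μ1 μk μk1 μm : ℚ)
    {Ek Q Ek' : T.Obj}
    (hEkmax : T.μmax Ek = μ1) (hEkmin : T.μmin Ek = μk)
    (hQmax : T.μmax Q = μk1) (hQmin : T.μmin Q = μm)
    (h : T.SES (T.twist Q 1) Ek' Ek) :
    T.μmax Ek' - T.μmin Ek' ≤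
      max (max (μk1 - μm) ((μ1 - μm) - 1)) (max (μk1 - μk + 1) (μ1 - μk)) := by
  have hspread := T.μmax_sub_μmin_le_of_SES h
  rw [T.μmax_twist, T.μmin_twist, hQmax, hQmin, hEkmax, hEkmin, Int.cast_one,
    max_sub_min_eq_max_max] at hspread
  rwa [add_sub_add_right_eq_sub, sub_add_eq_sub_sub, add_sub_right_comm] at hspread
end

section
/- Let ρ: E → E' be a morphism of rank-r locally free sheaves on a complex manifold (or smooth variety) M with smooth hypersurface D, such that z_D·ρ⁻¹ extends holomorphically across D where ρ is invertible off D, i.e., there exist holomorphic morphisms ρ: E → E' and τ: E' → E with τ∘ρ = z_D·Id_E and ρ∘τ = z_D·Id_{E'} for a local defining function z_D of D. Then at every point of D, rank(ρ|_D) + rank(τ|_D) ≥ r, and consequently ker(τ|_D) = im(ρ|_D) fiberwise at every point of D where both restrictions have locally constant rank. -/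
open PowerSeries

/-!
Compare low-order coefficients. With `A = ρ(0)` and `B = τ(0)`, the constant term of
`τ * ρ = X` gives `B * A = 0`, and the linear term of `ρ * τ = X` gives `A * τ₁ + ρ₁ * B = 1`.
Hence `im A ⊆ ker B`, and every `x ∈ ker B` satisfies `x = A (τ₁ x)`, so `im A = ker B`.
Rank–nullity for `B` then gives `rank A + rank B = r`.
-/

namespace PowerSeries

variable {R : Type*} [Semiring R]

theorem constantCoeff_mul_constantCoeff_eq_zero_of_mul_eq_X {f g : R⟦X⟧} (h : f * g = X) :
    constantCoeff f * constantCoeff g = 0 := by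
  rw [← map_mul, h, constantCoeff_X]

theorem coeff_one_add_coeff_one_eq_one_of_mul_eq_X {f g : R⟦X⟧} (h : f * g = X) :
    constantCoeff f * coeff 1 g + coeff 1 f * constantCoeff g = 1 := by
  have h₁ := congrArg (coeff 1) h
  rwa [coeff_mul, Finset.Nat.sum_antidiagonal_eq_sum_range_succ_mk, Finset.sum_range_succ,
    Finset.sum_range_one, coeff_one_X, coeff_zero_eq_constantCoeff_apply,
    coeff_zero_eq_constantCoeff_apply] at h₁

end PowerSeries

namespace Matrix

variable {n : Type*} [Fintype n]

theorem range_mulVecLin_eq_ker_of_mul_eq_zero_of_mul_add_mul_eq_one {R : Type*} [CommSemiring R]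
    [DecidableEq n] {A B C D : Matrix n n R}
    (hBA : B * A = 0) (hsplit : A * C + D * B = 1) :
    LinearMap.range A.mulVecLin = LinearMap.ker B.mulVecLin := by
  ext x
  simp only [LinearMap.mem_range, LinearMap.mem_ker, mulVecLin_apply]
  constructor
  · rintro ⟨y, rfl⟩
    rw [mulVec_mulVec, hBA, zero_mulVec]
  · intro hx
    refine ⟨C *ᵥ x, ?_⟩
    have hx' := congrArg (· *ᵥ x) hsplit
    simpa only [add_mulVec, ← mulVec_mulVec, hx, mulVec_zero, add_zero, one_mulVec] using hx'

theorem rank_add_rank_eq_of_range_eq_ker {K : Type*} [Field K] {A B : Matrix n n K}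
    (h : LinearMap.range A.mulVecLin = LinearMap.ker B.mulVecLin) :
    A.rank + B.rank = Fintype.card n := by
  rw [rank, rank, h, add_comm, LinearMap.finrank_range_add_finrank_ker,
    Module.finrank_fintype_fun_eq_card]

end Matrix

/-- (Fiberwise statement underlying Claim 3.8 of Chen–Sun.)  Let
`ρ : E → E'` and `τ : E' → E` be holomorphic morphisms of rank-`r` bundles near a point of
the smooth hypersurface `D = {z = 0}` with `τ∘ρ = z·Id_E` and `ρ∘τ = z·Id_{E'}` for a
local defining function `z` of `D`.  Then, at every point of `D`,
`rank(ρ|_D) + rank(τ|_D) ≥ r`, and consequently `ker(τ|_D) = im(ρ|_D)` fiberwise.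

Formalized in the transverse coordinate: `ρ`, `τ` are formal power series in `z` with
`r × r` complex matrix coefficients (after trivializing `E`, `E'`); `ρ|_D` and `τ|_D` are
the constant coefficients, and `X = z·Id`. -/
theorem rank_and_kernel_image_of_hecke_pair (r : ℕ)
    (ρ τ : PowerSeries (Matrix (Fin r) (Fin r) ℂ))
    (h1 : τ * ρ = PowerSeries.X)
    (h2 : ρ * τ = PowerSeries.X) :
    r ≤ (PowerSeries.coeff 0 ρ).rank + (PowerSeries.coeff 0 τ).rank ∧
    LinearMap.range (Matrix.mulVecLin (PowerSeries.coeff 0 ρ)) =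
      LinearMap.ker (Matrix.mulVecLin (PowerSeries.coeff 0 τ)) := by
  simp only [coeff_zero_eq_constantCoeff_apply]
  have hrange : LinearMap.range (constantCoeff ρ).mulVecLin =
      LinearMap.ker (constantCoeff τ).mulVecLin :=
    Matrix.range_mulVecLin_eq_ker_of_mul_eq_zero_of_mul_add_mul_eq_one
      (constantCoeff_mul_constantCoeff_eq_zero_of_mul_eq_X h1)
      (coeff_one_add_coeff_one_eq_one_of_mul_eq_X h2)
  refine ⟨?_, hrange⟩
  rw [Matrix.rank_add_rank_eq_of_range_eq_ker hrange, Fintype.card_fin]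
end
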